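/- arXiv:1506.05842 — 3 statements merged into one kernel-verified Lean document; each statement's English description precedes it below -/
import Mathlib

section
/- Let N ≥ 1 and suppose a_1, ..., a_J ∈ ℝ, b_1, ..., b_J ∈ ℝ with the pairs (b_j, q_j) pairwise distinct, and q_j ∈ ℕ. If the function f(ρ) = Σ_{j=1}^J a_j ρ^{i b_j} (log ρ)^{q_j} (defined for ρ ∈ (0,1)) tends to 0 as ρ → 0⁺ together with all iterates of ρ ∂_ρ applied to f, then a_j = 0 for all j. -/
/-!
Substituting `ρ = e^t` turns `ρ ∂_ρ` into `d/dt` and `f` into the exponential polynomial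
`g(t) = ∑_γ e^{iγt} P_γ(t)` with `P_γ = ∑_{b_j = γ} a_j X^{q_j}`, all of whose derivatives tend
to `0` as `t → -∞`. The operator `d/dt - iβ` acts on the coefficient of `e^{iγt}` as
`p ↦ p' + i(γ - β) p`: nilpotent for `γ = β`, injective otherwise. Applying a high power of it
removes the frequency `β` without destroying the hypothesis, so by induction on the set of
frequencies every `P_γ` vanishes except the one of `β`; for that one `|P_β(t)| → 0` at `-∞`
forces `P_β = 0`. Since the pairs `(b_j, q_j)` are distinct, `a_j` is a coefficient of `P_{b_j}`.
-/

open Filter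

/-- The operator `ρ ∂_ρ` acting on complex-valued functions of a real variable. -/
noncomputable def rhoD (f : ℝ → ℂ) : ℝ → ℂ := fun ρ => (ρ : ℂ) * deriv f ρ

open Polynomial Complex Set

namespace Polynomial

/-- `d/dt (e^{ct} p(t)) = e^{ct} (twistDeriv c p)(t)`. -/
noncomputable def twistDeriv (c : ℂ) (p : ℂ[X]) : ℂ[X] := derivative p + C c * p

@[simp] lemma twistDeriv_zero_right (c : ℂ) : twistDeriv c 0 = 0 := by simp [twistDeriv]

lemma twistDeriv_comm (c d : ℂ) (p : ℂ[X]) :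
    twistDeriv c (twistDeriv d p) = twistDeriv d (twistDeriv c p) := by
  simp only [twistDeriv, derivative_add, derivative_mul, derivative_C, zero_mul, zero_add]
  ring

lemma iterate_twistDeriv_zero_eq_zero {p : ℂ[X]} {n : ℕ} (hn : p.natDegree < n) :
    (twistDeriv 0)^[n] p = 0 := by
  have : twistDeriv 0 = derivative := by ext1 p; simp [twistDeriv]
  rw [this]
  exact iterate_derivative_eq_zero hn

lemma twistDeriv_injective {c : ℂ} (hc : c ≠ 0) : Function.Injective (twistDeriv c) := by
  intro p r h
  rw [← sub_eq_zero] at h ⊢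
  set s := p - r
  have hs : derivative s = -(C c * s) := by
    simp only [twistDeriv] at h
    simp only [s, derivative_sub, mul_sub]
    linear_combination h
  by_contra hs0
  have hdeg := natDegree_derivative_lt (p := s)
  rw [hs, natDegree_neg, natDegree_C_mul hc] at hdeg
  obtain ⟨x, hx⟩ := natDegree_eq_zero.1 (by_contra fun h0 => (hdeg h0).false)
  rw [← hx, derivative_C, eq_comm, neg_eq_zero, ← C_mul, C_eq_zero] at hs
  exact hs0 (by rw [← hx, (mul_eq_zero.1 hs).resolve_left hc, map_zero])

lemma eq_zero_of_tendsto_norm_eval_atBot {p : ℂ[X]}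
    (h : Tendsto (fun t : ℝ => ‖p.eval (t : ℂ)‖) atBot (nhds 0)) : p = 0 := by
  rcases lt_or_ge 0 p.degree with hd | hd
  · have hz : Tendsto (fun t : ℝ => ‖(t : ℂ)‖) atBot atTop := by
      simpa only [norm_real, Real.norm_eq_abs] using tendsto_abs_atBot_atTop
    exact absurd h (not_tendsto_nhds_of_tendsto_atTop (p.tendsto_norm_atTop hd hz) 0)
  · rw [eq_C_of_degree_le_zero hd] at h ⊢
    simp only [eval_C] at h
    rw [norm_eq_zero.1 (tendsto_nhds_unique tendsto_const_nhds h), map_zero]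

end Polynomial

namespace ExpPoly

noncomputable def expMonomial (γ : ℝ) (p : ℂ[X]) (t : ℝ) : ℂ :=
  exp (I * γ * t) * p.eval (t : ℂ)

noncomputable def expPoly (S : Finset ℝ) (P : ℝ → ℂ[X]) (t : ℝ) : ℂ :=
  ∑ γ ∈ S, expMonomial γ (P γ) t

noncomputable def coeffTwist (c : ℝ → ℂ) (P : ℝ → ℂ[X]) (γ : ℝ) : ℂ[X] :=
  twistDeriv (c γ) (P γ)

lemma iterate_coeffTwist_apply (c : ℝ → ℂ) (P : ℝ → ℂ[X]) (γ : ℝ) (n : ℕ) :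
    (coeffTwist c)^[n] P γ = (twistDeriv (c γ))^[n] (P γ) := by
  induction n generalizing P with
  | zero => rfl
  | succ n ih => exact ih (coeffTwist c P)

lemma coeffTwist_commute (c d : ℝ → ℂ) : Function.Commute (coeffTwist c) (coeffTwist d) :=
  fun P => funext fun γ => twistDeriv_comm (c γ) (d γ) (P γ)

@[simp] lemma expMonomial_zero_right (γ : ℝ) : expMonomial γ 0 = 0 := by
  ext t
  simp [expMonomial]

lemma norm_expMonomial (γ : ℝ) (p : ℂ[X]) (t : ℝ) :
    ‖expMonomial γ p t‖ = ‖p.eval (t : ℂ)‖ := by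
  simp [expMonomial, norm_exp, mul_assoc]

lemma hasDerivAt_expMonomial (γ : ℝ) (p : ℂ[X]) (t : ℝ) :
    HasDerivAt (expMonomial γ p) (expMonomial γ (twistDeriv (I * γ) p) t) t := by
  have hexp : HasDerivAt (fun t : ℝ => exp (I * γ * t)) (exp (I * γ * t) * (I * γ)) t := by
    simpa using ((hasDerivAt_id t).ofReal_comp.const_mul (I * γ)).cexp
  refine (hexp.fun_mul (p.hasDerivAt (t : ℂ)).comp_ofReal).congr_deriv ?_
  simp only [expMonomial, twistDeriv, eval_add, eval_mul, eval_C]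
  ring

lemma hasDerivAt_expPoly (S : Finset ℝ) (P : ℝ → ℂ[X]) (t : ℝ) :
    HasDerivAt (expPoly S P) (expPoly S (coeffTwist (fun γ => I * γ) P) t) t :=
  HasDerivAt.fun_sum fun γ _ => hasDerivAt_expMonomial γ (P γ) t

lemma expPoly_coeffTwist_sub (S : Finset ℝ) (P : ℝ → ℂ[X]) (β : ℝ) (t : ℝ) :
    expPoly S (coeffTwist (fun γ => I * (γ - β)) P) t =
      expPoly S (coeffTwist (fun γ => I * γ) P) t - I * β * expPoly S P t := by
  simp only [expPoly, Finset.mul_sum, ← Finset.sum_sub_distrib]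
  refine Finset.sum_congr rfl fun γ _ => ?_
  simp only [expMonomial, coeffTwist, twistDeriv, eval_add, eval_mul, eval_C]
  ring

lemma expPoly_insert {S : Finset ℝ} {β : ℝ} (hβS : β ∉ S) (P : ℝ → ℂ[X]) :
    expPoly (insert β S) P = expMonomial β (P β) + expPoly S P :=
  funext fun _ => Finset.sum_insert hβS

/-- By `hasDerivAt_expPoly`, the `k`-th iterate below gives the coefficients of the `k`-th
derivative of `expPoly S P`. -/
def DerivsTendstoZero (S : Finset ℝ) (P : ℝ → ℂ[X]) : Prop :=
  ∀ k, Tendsto (expPoly S ((coeffTwist fun γ => I * γ)^[k] P)) atBot (nhds 0)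

lemma DerivsTendstoZero.coeffTwist_sub {S : Finset ℝ} {P : ℝ → ℂ[X]}
    (h : DerivsTendstoZero S P) (β : ℝ) :
    DerivsTendstoZero S (coeffTwist (fun γ => I * (γ - β)) P) := by
  intro k
  rw [((coeffTwist_commute _ _).iterate_left k).eq]
  have h' := (h (k + 1)).sub ((h k).const_mul (I * β))
  rw [mul_zero, sub_zero] at h'
  refine h'.congr fun t => ?_
  rw [Function.iterate_succ_apply', expPoly_coeffTwist_sub]

lemma DerivsTendstoZero.iterate_coeffTwist_sub {S : Finset ℝ} {P : ℝ → ℂ[X]}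
    (h : DerivsTendstoZero S P) (β : ℝ) (n : ℕ) :
    DerivsTendstoZero S ((coeffTwist fun γ => I * (γ - β))^[n] P) := by
  induction n with
  | zero => exact h
  | succ n ih => simpa only [Function.iterate_succ_apply'] using ih.coeffTwist_sub β

lemma DerivsTendstoZero.of_insert {S : Finset ℝ} {P : ℝ → ℂ[X]} {β : ℝ} (hβS : β ∉ S)
    (h : DerivsTendstoZero (insert β S) P) (hβ : P β = 0) : DerivsTendstoZero S P := by
  intro k
  have hβk : (coeffTwist (fun γ => I * γ))^[k] P β = 0 := by
    rw [iterate_coeffTwist_apply, hβ, Function.iterate_fixed (twistDeriv_zero_right _)]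
  simpa only [expPoly_insert hβS, hβk, expMonomial_zero_right, zero_add] using h k

lemma tendsto_expMonomial_atBot_iff {γ : ℝ} {p : ℂ[X]} :
    Tendsto (expMonomial γ p) atBot (nhds 0) ↔ p = 0 := by
  refine ⟨fun h => eq_zero_of_tendsto_norm_eval_atBot ?_, fun hp => ?_⟩
  · simpa only [norm_expMonomial, norm_zero] using h.norm
  · rw [hp, expMonomial_zero_right]
    exact tendsto_const_nhds

theorem DerivsTendstoZero.eq_zero {S : Finset ℝ} {P : ℝ → ℂ[X]} (h : DerivsTendstoZero S P) :
    ∀ γ ∈ S, P γ = 0 := by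
  induction S using Finset.induction_on generalizing P with
  | empty => simp
  | insert β S hβS ih =>
    obtain ⟨N, hN⟩ : ∃ N, (P β).natDegree < N := ⟨_, Nat.lt_succ_self _⟩
    have hAβ : (coeffTwist fun γ => I * (γ - β))^[N] P β = 0 := by
      rw [iterate_coeffTwist_apply, sub_self, mul_zero]
      exact iterate_twistDeriv_zero_eq_zero hN
    have hS : ∀ γ ∈ S, P γ = 0 := by
      intro γ hγ
      have hne : I * (γ - β) ≠ 0 :=
        mul_ne_zero I_ne_zero (sub_ne_zero.2 (ofReal_injective.ne (ne_of_mem_of_not_mem hγ hβS)))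
      have hAγ := ih ((h.iterate_coeffTwist_sub β N).of_insert hβS hAβ) γ hγ
      rw [iterate_coeffTwist_apply] at hAγ
      refine (twistDeriv_injective hne).iterate N ?_
      rwa [Function.iterate_fixed (twistDeriv_zero_right _)]
    have hSzero : expPoly S P = 0 := funext fun t =>
      Finset.sum_eq_zero fun γ hγ => by simp [hS γ hγ]
    have hβ : Tendsto (expMonomial β (P β)) atBot (nhds 0) := by
      simpa only [Function.iterate_zero, id, expPoly_insert hβS, hSzero, add_zero] using h 0
    exact (Finset.forall_mem_insert _ _ _).2 ⟨tendsto_expMonomial_atBot_iff.1 hβ, hS⟩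

noncomputable def fiberPoly {ι : Type*} [Fintype ι] (a : ι → ℂ) (b : ι → ℝ) (q : ι → ℕ)
    (γ : ℝ) : ℂ[X] :=
  ∑ j ∈ Finset.univ.filter (fun j => b j = γ), C (a j) * X ^ q j

lemma expPoly_fiberPoly {ι : Type*} [Fintype ι] [DecidableEq ι] (a : ι → ℂ) (b : ι → ℝ)
    (q : ι → ℕ) (t : ℝ) :
    expPoly (Finset.univ.image b) (fiberPoly a b q) t =
      ∑ j, a j * exp (I * b j * t) * (t : ℂ) ^ q j := by
  rw [← Finset.sum_fiberwise_of_maps_to (g := b) (t := Finset.univ.image b)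
    fun j _ => Finset.mem_image_of_mem b (Finset.mem_univ j)]
  refine Finset.sum_congr rfl fun γ _ => ?_
  rw [expMonomial, fiberPoly, eval_finsetSum, Finset.mul_sum]
  refine Finset.sum_congr rfl fun j hj => ?_
  rw [(Finset.mem_filter.1 hj).2]
  simp only [eval_mul, eval_C, eval_pow, eval_X]
  ring

lemma coeff_fiberPoly {ι : Type*} [Fintype ι] (a : ι → ℂ) {b : ι → ℝ} {q : ι → ℕ}
    (hbq : Function.Injective fun j => (b j, q j)) (j : ι) :
    (fiberPoly a b q (b j)).coeff (q j) = a j := by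
  rw [fiberPoly, finsetSum_coeff,
    Finset.sum_eq_single_of_mem j (by simp)]
  · simp
  · intro i hi hij
    have hq : q i ≠ q j := fun hq => hij (hbq (Prod.ext (Finset.mem_filter.1 hi).2 hq))
    simp [coeff_X_pow, hq.symm]

end ExpPoly

lemma rhoD_iterate_eqOn_comp_log {s : Set ℝ} (hs : IsOpen s) (hs0 : (0 : ℝ) ∉ s)
    {f : ℝ → ℂ} {g : ℕ → ℝ → ℂ} (hg : ∀ k t, HasDerivAt (g k) (g (k + 1) t) t)
    (hf : EqOn f (g 0 ∘ Real.log) s) (k : ℕ) :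
    EqOn (rhoD^[k] f) (g k ∘ Real.log) s := by
  induction k with
  | zero => exact hf
  | succ k ih =>
    intro ρ hρ
    have hρ0 : ρ ≠ 0 := ne_of_mem_of_not_mem hρ hs0
    have hderiv : HasDerivAt (g k ∘ Real.log) (ρ⁻¹ • g (k + 1) (Real.log ρ)) ρ :=
      (hg k (Real.log ρ)).scomp ρ (Real.hasDerivAt_log hρ0)
    rw [Function.iterate_succ_apply', rhoD, (ih.eventuallyEq_of_mem (hs.mem_nhds hρ)).deriv_eq,
      hderiv.deriv, real_smul, ofReal_inv, ← mul_assoc, mul_inv_cancel₀ (ofReal_ne_zero.2 hρ0),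
      one_mul, Function.comp_apply]

lemma tendsto_atBot_of_eqOn_comp_log {F G : ℝ → ℂ} {l : Filter ℂ}
    (hF : Tendsto F (nhdsWithin 0 (Ioi 0)) l) (hFG : EqOn F (G ∘ Real.log) (Ioo 0 1)) :
    Tendsto G atBot l := by
  refine (hF.comp Real.tendsto_exp_atBot_nhdsGT).congr' ?_
  filter_upwards [eventually_lt_atBot 0] with t ht
  rw [Function.comp_apply, hFG ⟨Real.exp_pos t, Real.exp_lt_one_iff.2 ht⟩, Function.comp_apply,
    Real.log_exp]

open ExpPoly in
theorem stmt0_general (J : ℕ) (a b : Fin J → ℝ) (q : Fin J → ℕ)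
    (hdist : Function.Injective (fun j : Fin J => (b j, q j)))
    (f : ℝ → ℂ)
    (hf : ∀ ρ : ℝ, 0 < ρ → ρ < 1 →
      f ρ = ∑ j, (a j : ℂ) * Complex.exp (Complex.I * (b j) * Real.log ρ) *
        ((Real.log ρ : ℂ)) ^ (q j))
    (hlim : ∀ k : ℕ, Tendsto (rhoD^[k] f) (nhdsWithin 0 (Set.Ioi 0)) (nhds 0)) :
    ∀ j, a j = 0 := by
  set P := fiberPoly (fun j => (a j : ℂ)) b q
  set g : ℕ → ℝ → ℂ := fun k => expPoly (Finset.univ.image b) ((coeffTwist fun γ => I * γ)^[k] P)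
  have hg : ∀ k t, HasDerivAt (g k) (g (k + 1) t) t := fun k t => by
    simpa only [g, Function.iterate_succ_apply'] using hasDerivAt_expPoly _ _ t
  have hfg : EqOn f (g 0 ∘ Real.log) (Ioo 0 1) := fun ρ hρ => by
    simp only [g, P, Function.comp_apply, Function.iterate_zero, id, expPoly_fiberPoly,
      hf ρ hρ.1 hρ.2]
  have hP : DerivsTendstoZero (Finset.univ.image b) P := fun k =>
    tendsto_atBot_of_eqOn_comp_log (hlim k)
      (rhoD_iterate_eqOn_comp_log isOpen_Ioo (lt_irrefl 0 ·.1) hg hfg k)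
  intro j
  have hcoeff : (P (b j)).coeff (q j) = a j := coeff_fiberPoly _ hdist j
  rw [hP.eq_zero (b j) (Finset.mem_image_of_mem b (Finset.mem_univ j)), coeff_zero] at hcoeff
  exact_mod_cast hcoeff.symm

theorem stmt0 (J : ℕ) (hJ : 1 ≤ J) (a b : Fin J → ℝ) (q : Fin J → ℕ)
    (hdist : Function.Injective (fun j : Fin J => (b j, q j)))
    (f : ℝ → ℂ)
    (hf : ∀ ρ : ℝ, 0 < ρ → ρ < 1 →
      f ρ = ∑ j, (a j : ℂ) * Complex.exp (Complex.I * (b j) * Real.log ρ) *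
        ((Real.log ρ : ℂ)) ^ (q j))
    (hlim : ∀ k : ℕ, Tendsto (rhoD^[k] f) (nhdsWithin 0 (Set.Ioi 0)) (nhds 0)) :
    ∀ j, a j = 0 :=
  stmt0_general J a b q hdist f hf hlim
end

section
/- Let P(s) = a s² + b s + c be a quadratic polynomial with a ≠ 0, with two simple roots s₁ ≠ s₂. If a function w(ρ) = Σ_{i=1}^N ρ^{s_i} Σ_{p=0}^{p_i} c_{ip} (log ρ)^p (with all exponents s_i having the same real part μ and imaginary parts distinct) satisfies L w = a(ρ∂_ρ)²w + b(ρ∂_ρ)w + c w = o(ρ^μ) as ρ → 0 together with all ρ∂_ρ-derivatives, then for each i with P(s_i) ≠ 0 all coefficients c_{ip} vanish, and for each i with P(s_i) = 0 all coefficients c_{ip} with p ≥ 1 vanish. -/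
/-!
Substituting `x = log ρ` turns `ρ ∂_ρ` into `d/dx` and `w` into an exponential polynomial
`∑ e^{s_i x} P_i(x)`, so `ρ^{-μ} L w` becomes `∑ e^{(s_i - μ) x} Q_i(x)` with
`Q_i = P(s_i) P_i + P'(s_i) P_i' + a P_i''`, and the frequencies `s_i - μ` are distinct and
purely imaginary. If such an exponential polynomial tends to `0` at `-∞` together with all its
derivatives, every `Q_i` vanishes: `(d/dx - z_i)^(deg Q_i + 1)` annihilates the `i`-th term and is
injective on the others, which reduces to a single term `e^{z_i x} Q_i(x)`, and then
`(d/dx - z_i)^(deg Q_i)` leaves `e^{z_i x}` times a nonzero constant, of constant modulus.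
Comparing degrees in `Q_i = 0` gives `P_i = 0` when `P(s_i) ≠ 0`, and `P_i' = 0` when `s_i` is a
simple root.
-/

open Filter

open Topology Polynomial Set

namespace Polynomial

variable {K : Type*} [Field K]

theorem eq_zero_of_smul_add_derivative_eq_zero {α : K} {p q : K[X]} (hα : α ≠ 0)
    (hq : q.degree ≤ p.degree) (h : α • p + derivative q = 0) : p = 0 := by
  by_contra hp
  have hlt : (derivative q).degree < (α • p).degree := by
    rw [smul_eq_C_mul, degree_C_mul hα]
    rcases eq_or_ne q 0 with rfl | hq0
    · simpa [bot_lt_iff_ne_bot] using hp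
    · exact (degree_derivative_lt hq0).trans_le hq
  rw [add_eq_zero_iff_eq_neg.1 h, degree_neg] at hlt
  exact hlt.false

theorem injective_smul_one_add_derivative {α : K} (hα : α ≠ 0) :
    Function.Injective (α • 1 + derivative : Module.End K K[X]) :=
  (injective_iff_map_eq_zero _).2 fun _ hp =>
    eq_zero_of_smul_add_derivative_eq_zero hα le_rfl hp

theorem eq_zero_of_smul_add_derivative_smul_add_smul_derivative_eq_zero {α β a : K} {p : K[X]}
    (hα : α ≠ 0) (h : α • p + derivative (β • p + a • derivative p) = 0) : p = 0 :=
  eq_zero_of_smul_add_derivative_eq_zero hα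
    ((degree_add_le _ _).trans <| max_le (degree_smul_le _ _)
      ((degree_smul_le _ _).trans degree_derivative_le)) h

theorem natDegree_eq_zero_of_derivative_smul_add_smul_derivative_eq_zero [CharZero K]
    {β a : K} {p : K[X]} (hβ : β ≠ 0) (h : derivative (β • p + a • derivative p) = 0) :
    p.natDegree = 0 := by
  rw [derivative_add, derivative_smul] at h
  exact derivative_eq_zero.1 (eq_zero_of_smul_add_derivative_eq_zero hβ (degree_smul_le _ _) h)

theorem iterate_derivative_natDegree {R : Type*} [CommSemiring R] (p : R[X]) :
    derivative^[p.natDegree] p = C (p.natDegree.factorial • p.leadingCoeff) := by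
  rw [eq_C_of_natDegree_eq_zero (Nat.eq_zero_of_le_zero
    ((natDegree_iterate_derivative p _).trans_eq (Nat.sub_self _))),
    coeff_iterate_derivative, zero_add, Nat.descFactorial_self, leadingCoeff]

end Polynomial

theorem two_mul_add_ne_zero_of_simple_root {K : Type*} [Field K] {a b c s₁ s₂ s : K} (ha : a ≠ 0)
    (hne : s₁ ≠ s₂) (hroots : ∀ z, a * z ^ 2 + b * z + c = a * (z - s₁) * (z - s₂))
    (hs : a * s ^ 2 + b * s + c = 0) : 2 * a * s + b ≠ 0 := by
  intro h
  have h₀ := hroots 0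
  have h₁ := hroots 1
  -- `(2as + b)² = b² - 4ac + 4a (as² + bs + c)`, and the discriminant `b² - 4ac` is `a² (s₁ - s₂)²`
  have : (a * (s₁ - s₂)) ^ 2 = 0 := by
    linear_combination (2 * a * s + b) * h - 4 * a * hs - (b - a * (s₁ + s₂)) * (h₁ - h₀)
      + 4 * a * h₀
  exact mul_ne_zero ha (sub_ne_zero.2 hne) (pow_eq_zero_iff two_ne_zero |>.1 this)

section ExpPoly

variable {ι : Type*}

noncomputable def expPolyDeriv (z : ι → ℂ) : Module.End ℂ (ι → ℂ[X]) :=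
  LinearMap.pi fun i => z i • LinearMap.proj i + derivative ∘ₗ LinearMap.proj i

theorem expPolyDeriv_apply (z : ι → ℂ) (P : ι → ℂ[X]) (i : ι) :
    expPolyDeriv z P i = z i • P i + derivative (P i) := rfl

theorem expPolyDeriv_sub_smul_pow_apply (z : ι → ℂ) (l : ℂ) (n : ℕ) (P : ι → ℂ[X]) (i : ι) :
    ((expPolyDeriv z - l • 1) ^ n) P i
      = (((z i - l) • 1 + derivative : Module.End ℂ ℂ[X]) ^ n) (P i) := by
  induction n with
  | zero => rfl
  | succ n ih =>
    simp only [pow_succ', Module.End.mul_apply, LinearMap.sub_apply, LinearMap.smul_apply,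
      Module.End.one_apply, LinearMap.add_apply, Pi.sub_apply, Pi.smul_apply,
      expPolyDeriv_apply, ih, sub_smul]
    abel

theorem expPolyDeriv_quadratic_apply (z : ι → ℂ) (a b c : ℂ) (P : ι → ℂ[X]) (i : ι) :
    (a • (expPolyDeriv z ^ 2) P + b • expPolyDeriv z P + c • P) i
      = (a * z i ^ 2 + b * z i + c) • P i
        + derivative ((2 * a * z i + b) • P i + a • derivative (P i)) := by
  simp only [pow_two, Module.End.mul_apply, Pi.add_apply, Pi.smul_apply, expPolyDeriv_apply,
    map_add, map_smul]
  module

variable [Fintype ι]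

noncomputable def expPoly (z : ι → ℂ) : (ι → ℂ[X]) →ₗ[ℂ] ℝ → ℂ where
  toFun P x := ∑ i, Complex.exp (z i * x) * (P i).eval (x : ℂ)
  map_add' P Q := by ext x; simp [mul_add, Finset.sum_add_distrib]
  map_smul' l P := by ext x; simp [Finset.mul_sum, mul_left_comm]

theorem expPoly_apply (z : ι → ℂ) (P : ι → ℂ[X]) (x : ℝ) :
    expPoly z P x = ∑ i, Complex.exp (z i * x) * (P i).eval (x : ℂ) := rfl

theorem hasDerivAt_expPoly (z : ι → ℂ) (P : ι → ℂ[X]) (x : ℝ) :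
    HasDerivAt (expPoly z P) (expPoly z (expPolyDeriv z P) x) x := by
  have hexp (i : ι) : HasDerivAt (fun x : ℝ => Complex.exp (z i * x))
      (Complex.exp (z i * x) * z i) x :=
    ((Complex.ofRealCLM.hasDerivAt (x := x)).const_mul (z i)).cexp.congr_deriv (by simp)
  have hpoly (i : ι) : HasDerivAt (fun x : ℝ => (P i).eval (x : ℂ))
      ((derivative (P i)).eval (x : ℂ)) x :=
    ((P i).hasDerivAt (x : ℂ)).comp_ofReal
  refine (HasDerivAt.fun_sum (u := Finset.univ) fun i _ => (hexp i).mul (hpoly i)).congr_deriv ?_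
  simp only [expPoly_apply, expPolyDeriv_apply, eval_add, eval_smul, smul_eq_mul]
  exact Finset.sum_congr rfl fun i _ => by ring

theorem cexp_neg_mul_expPoly (z : ι → ℂ) (m : ℂ) (P : ι → ℂ[X]) (x : ℝ) :
    Complex.exp (-m * x) * expPoly z P x = expPoly (fun i => z i - m) P x := by
  simp only [expPoly_apply, Finset.mul_sum, ← mul_assoc, ← Complex.exp_add]
  exact Finset.sum_congr rfl fun i _ => by ring_nf

def TendstoZeroWithDerivs (z : ι → ℂ) (P : ι → ℂ[X]) : Prop :=
  ∀ k, Tendsto (expPoly z ((expPolyDeriv z ^ k) P)) atBot (𝓝 0)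

namespace TendstoZeroWithDerivs

variable {z : ι → ℂ} {P : ι → ℂ[X]}

theorem sub_smul_apply (h : TendstoZeroWithDerivs z P) (l : ℂ) :
    TendstoZeroWithDerivs z ((expPolyDeriv z - l • 1) P) := by
  intro k
  have hk : (expPolyDeriv z ^ k) ((expPolyDeriv z - l • 1) P)
      = (expPolyDeriv z ^ (k + 1)) P - l • (expPolyDeriv z ^ k) P := by
    rw [pow_succ, Module.End.mul_apply]
    simp
  rw [hk, map_sub, map_smul]
  have hlim := (h (k + 1)).sub ((h k).const_smul l)
  rw [smul_zero, sub_zero] at hlim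
  exact hlim

theorem sub_smul_pow_apply (h : TendstoZeroWithDerivs z P) (l : ℂ) (n : ℕ) :
    TendstoZeroWithDerivs z (((expPolyDeriv z - l • 1) ^ n) P) := by
  induction n with
  | zero => exact h
  | succ n ih => rw [pow_succ', Module.End.mul_apply]; exact ih.sub_smul_apply l

end TendstoZeroWithDerivs

end ExpPoly

section Vanishing

variable {ι : Type*} [Fintype ι] {z : ι → ℂ} {P : ι → ℂ[X]}

theorem TendstoZeroWithDerivs.eq_zero_of_forall_ne {i : ι} (hre : (z i).re = 0)
    (h : TendstoZeroWithDerivs z P) (hP : ∀ j ≠ i, P j = 0) : P = 0 := by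
  classical
  suffices hPi : P i = 0 by
    funext j
    rcases eq_or_ne j i with rfl | hj
    exacts [hPi, hP j hj]
  by_contra hPi
  set c := (P i).natDegree.factorial • (P i).leadingCoeff
  have hc : c ≠ 0 := smul_ne_zero (Nat.factorial_ne_zero _) (leadingCoeff_ne_zero.2 hPi)
  obtain ⟨R, hR, hRi, hRj⟩ : ∃ R, TendstoZeroWithDerivs z R ∧ R i = C c ∧ ∀ j ≠ i, R j = 0 :=
    ⟨_, h.sub_smul_pow_apply (z i) (P i).natDegree,
      by rw [expPolyDeriv_sub_smul_pow_apply, sub_self, zero_smul, zero_add,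
        Module.End.pow_apply, iterate_derivative_natDegree],
      fun j hj => by rw [expPolyDeriv_sub_smul_pow_apply, hP j hj, map_zero]⟩
  have hRx (x : ℝ) : expPoly z R x = Complex.exp (z i * x) * c := by
    rw [expPoly_apply, Finset.sum_eq_single i (fun j _ hj => by simp [hRj j hj]) (by simp),
      hRi, eval_C]
  have hlim : Tendsto (fun x : ℝ => ‖Complex.exp (z i * x) * c‖) atBot (𝓝 0) := by
    simpa [hRx] using (hR 0).norm
  have hnorm (x : ℝ) : ‖Complex.exp (z i * x) * c‖ = ‖c‖ := by
    simp [Complex.norm_exp, hre]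
  simp only [hnorm, tendsto_const_nhds_iff, norm_eq_zero] at hlim
  exact hc hlim

theorem TendstoZeroWithDerivs.eq_zero (hre : ∀ i, (z i).re = 0) (hz : Function.Injective z)
    (h : TendstoZeroWithDerivs z P) : P = 0 := by
  classical
  suffices ∀ S : Finset ι, ∀ P, TendstoZeroWithDerivs z P → (∀ j ∉ S, P j = 0) → P = 0 from
    this Finset.univ P h (by simp)
  intro S
  induction S using Finset.induction_on with
  | empty => exact fun P _ hP => funext fun j => hP j (Finset.notMem_empty j)
  | insert i S _ ih =>
    intro P h hP
    set n := (P i).natDegree + 1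
    have hQ : ((expPolyDeriv z - z i • 1) ^ n) P = 0 := by
      refine ih _ (h.sub_smul_pow_apply _ _) fun j hj => ?_
      rw [expPolyDeriv_sub_smul_pow_apply]
      rcases eq_or_ne j i with rfl | hji
      · rw [sub_self, zero_smul, zero_add, Module.End.pow_apply,
          iterate_derivative_eq_zero (Nat.lt_succ_self _)]
      · rw [hP j (by simp [hj, hji]), map_zero]
    refine h.eq_zero_of_forall_ne (hre i) fun j hji => ?_
    have hinj := (injective_smul_one_add_derivative (sub_ne_zero.2 (hz.ne hji))).iterate n
    rw [← Module.End.coe_pow] at hinj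
    apply hinj
    rw [← expPolyDeriv_sub_smul_pow_apply, hQ, map_zero, Pi.zero_apply]

end Vanishing

theorem rhoD_eqOn_comp_log {U : Set ℝ} (hU : IsOpen U) (hU0 : U ⊆ Ioi 0) {f g g' : ℝ → ℂ}
    (hg : ∀ x, HasDerivAt g (g' x) x) (hf : EqOn f (g ∘ Real.log) U) :
    EqOn (rhoD f) (g' ∘ Real.log) U := by
  intro ρ hρ
  have hρ0 : ρ ≠ 0 := (hU0 hρ).ne'
  have hderiv : HasDerivAt (g ∘ Real.log) (ρ⁻¹ • g' (Real.log ρ)) ρ :=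
    (hg _).scomp ρ (Real.hasDerivAt_log hρ0)
  rw [rhoD, (hf.eventuallyEq_of_mem (hU.mem_nhds hρ)).deriv_eq, hderiv.deriv, Complex.real_smul,
    Complex.ofReal_inv, ← mul_assoc, mul_inv_cancel₀ (Complex.ofReal_ne_zero.2 hρ0), one_mul,
    Function.comp_apply]

theorem rhoD_iterate_eqOn_expPoly_comp_log {ι : Type*} [Fintype ι] {U : Set ℝ} (hU : IsOpen U)
    (hU0 : U ⊆ Ioi 0) {f : ℝ → ℂ} {z : ι → ℂ} {P : ι → ℂ[X]}
    (hf : EqOn f (expPoly z P ∘ Real.log) U) (k : ℕ) :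
    EqOn (rhoD^[k] f) (expPoly z ((expPolyDeriv z ^ k) P) ∘ Real.log) U := by
  induction k with
  | zero => exact hf
  | succ k ih =>
    rw [Function.iterate_succ_apply', pow_succ', Module.End.mul_apply]
    exact rhoD_eqOn_comp_log hU hU0 (hasDerivAt_expPoly z _) ih

theorem TendstoZeroWithDerivs.of_tendsto_rhoD_iterate {ι : Type*} [Fintype ι] {z : ι → ℂ}
    {P : ι → ℂ[X]} {g : ℝ → ℂ} (hg : EqOn g (expPoly z P ∘ Real.log) (Ioo 0 1))
    (h : ∀ k, Tendsto (rhoD^[k] g) (𝓝[>] 0) (𝓝 0)) : TendstoZeroWithDerivs z P := by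
  intro k
  have hlim : Tendsto (expPoly z ((expPolyDeriv z ^ k) P) ∘ Real.log) (𝓝[>] 0) (𝓝 0) :=
    (h k).congr' ((rhoD_iterate_eqOn_expPoly_comp_log isOpen_Ioo Ioo_subset_Ioi_self hg k
      ).eventuallyEq_of_mem (Ioo_mem_nhdsGT one_pos))
  simpa [Function.comp_def] using hlim.comp Real.tendsto_exp_atBot_nhdsGT

theorem stmt3 (a b c : ℂ) (ha : a ≠ 0) (s₁ s₂ : ℂ) (hne : s₁ ≠ s₂)
    (hroots : ∀ z : ℂ, a * z ^ 2 + b * z + c = a * (z - s₁) * (z - s₂))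
    (N : ℕ) (s : Fin N → ℂ) (μ : ℝ) (hre : ∀ i, (s i).re = μ)
    (him : Function.Injective fun i : Fin N => (s i).im)
    (pdeg : Fin N → ℕ) (cc : Fin N → ℕ → ℂ)
    (w : ℝ → ℂ)
    (hw : ∀ ρ : ℝ, 0 < ρ → ρ < 1 →
      w ρ = ∑ i, (ρ : ℂ) ^ (s i) *
        ∑ p ∈ Finset.range (pdeg i + 1), cc i p * ((Real.log ρ : ℂ)) ^ p)
    (Lw : ℝ → ℂ)
    (hLw : ∀ ρ : ℝ, Lw ρ = a * rhoD (rhoD w) ρ + b * rhoD w ρ + c * w ρ)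
    (hsmall : ∀ k : ℕ,
      Tendsto (rhoD^[k] (fun ρ : ℝ => ((ρ ^ (-μ) : ℝ) : ℂ) * Lw ρ))
        (nhdsWithin 0 (Set.Ioi 0)) (nhds 0)) :
    ∀ i, ∀ p ≤ pdeg i,
      ((a * (s i) ^ 2 + b * (s i) + c ≠ 0) → cc i p = 0) ∧
      (1 ≤ p → a * (s i) ^ 2 + b * (s i) + c = 0 → cc i p = 0) := by
  set P : Fin N → ℂ[X] := fun i => ∑ p ∈ Finset.range (pdeg i + 1), C (cc i p) * X ^ p
  set Q := a • (expPolyDeriv s ^ 2) P + b • expPolyDeriv s P + c • P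
  have hwP : EqOn w (expPoly s P ∘ Real.log) (Ioo 0 1) := fun ρ hρ => by
    simp only [hw ρ hρ.1 hρ.2, Function.comp_apply, expPoly_apply, P, eval_finsetSum, eval_C_mul,
      eval_pow, eval_X, Complex.cpow_def_of_ne_zero (Complex.ofReal_ne_zero.2 hρ.1.ne'),
      Complex.ofReal_log hρ.1.le, mul_comm (Complex.log _)]
  have hLwQ : EqOn (fun ρ : ℝ => ((ρ ^ (-μ) : ℝ) : ℂ) * Lw ρ)
      (expPoly (fun i => s i - μ) Q ∘ Real.log) (Ioo 0 1) := fun ρ hρ => by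
    have hD := rhoD_iterate_eqOn_expPoly_comp_log isOpen_Ioo Ioo_subset_Ioi_self hwP
    have h1 : rhoD w ρ = expPoly s (expPolyDeriv s P) (Real.log ρ) := by simpa using hD 1 hρ
    have h2 : rhoD (rhoD w) ρ = expPoly s ((expPolyDeriv s ^ 2) P) (Real.log ρ) := hD 2 hρ
    simp [Q, ← cexp_neg_mul_expPoly, hLw, h1, h2, hwP hρ, Real.rpow_def_of_pos hρ.1]
    ring_nf
  have hQ := (TendstoZeroWithDerivs.of_tendsto_rhoD_iterate hLwQ hsmall).eq_zero
    (fun i => by simp [hre]) (fun i j hij => him (by simpa using congrArg Complex.im hij))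
  intro i p hp
  have hQi := (expPolyDeriv_quadratic_apply s a b c P i).symm.trans (congrFun hQ i)
  have hcoeff : cc i p = (P i).coeff p := by simp [P, Nat.lt_succ_of_le hp]
  refine ⟨fun hres => ?_, fun hp1 hres => ?_⟩
  · rw [hcoeff, eq_zero_of_smul_add_derivative_smul_add_smul_derivative_eq_zero hres hQi,
      coeff_zero]
  · rw [hres, zero_smul, zero_add] at hQi
    have hdeg := natDegree_eq_zero_of_derivative_smul_add_smul_derivative_eq_zero
      (two_mul_add_ne_zero_of_simple_root ha hne hroots hres) hQi
    rw [hcoeff, coeff_eq_zero_of_natDegree_lt (hdeg.trans_lt hp1)]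
end

section
/- With H_{ḡ}(ρ) and A_{ḡ}(ρ) as above, for any strictly positive smooth function θ one has A_{θ⁴ḡ}(ρ) = θ^{-8} A_{ḡ}(ρ) and H_{θ⁴ḡ}(ρ) = θ^{-8} H_{ḡ}(ρ). -/
/-- Partial derivative in the `i`-th coordinate direction. -/
noncomputable def pd {n : ℕ} (i : Fin n) (f : (Fin n → ℝ) → ℝ) (x : Fin n → ℝ) : ℝ :=
  fderiv ℝ f x (Pi.single i 1)

/-- Christoffel symbols `Γ^k_{ij}` of a metric given as a matrix-valued function. -/
noncomputable def christoffel {n : ℕ} (g : (Fin n → ℝ) → Matrix (Fin n) (Fin n) ℝ)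
    (k i j : Fin n) (x : Fin n → ℝ) : ℝ :=
  (1/2) * ∑ l, (g x)⁻¹ k l *
    (pd i (fun y => g y l j) x + pd j (fun y => g y l i) x - pd l (fun y => g y i j) x)

/-- Ricci curvature `Ric_{ij}` in coordinates. -/
noncomputable def ricci {n : ℕ} (g : (Fin n → ℝ) → Matrix (Fin n) (Fin n) ℝ)
    (i j : Fin n) (x : Fin n → ℝ) : ℝ :=
  (∑ k, pd k (fun y => christoffel g k i j y) x)
    - (∑ k, pd j (fun y => christoffel g k k i y) x)
    + (∑ k, ∑ l, christoffel g k k l x * christoffel g l i j x)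
    - (∑ k, ∑ l, christoffel g k j l x * christoffel g l k i x)

/-- Scalar curvature `R[g]` in coordinates. -/
noncomputable def scalarCurv {n : ℕ} (g : (Fin n → ℝ) → Matrix (Fin n) (Fin n) ℝ)
    (x : Fin n → ℝ) : ℝ :=
  ∑ i, ∑ j, (g x)⁻¹ i j * ricci g i j x

/-- Laplace–Beltrami operator `Δ_g f = g^{ij}(∂_i∂_j f − Γ^k_{ij}∂_k f)`. -/
noncomputable def laplacian {n : ℕ} (g : (Fin n → ℝ) → Matrix (Fin n) (Fin n) ℝ)
    (f : (Fin n → ℝ) → ℝ) (x : Fin n → ℝ) : ℝ :=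
  ∑ i, ∑ j, (g x)⁻¹ i j *
    (pd i (fun y => pd j f y) x - ∑ k, christoffel g k i j x * pd k f x)

/-- `|df|²_g = g^{ij} ∂_i f ∂_j f`. -/
noncomputable def normdsq {n : ℕ} (g : (Fin n → ℝ) → Matrix (Fin n) (Fin n) ℝ)
    (f : (Fin n → ℝ) → ℝ) (x : Fin n → ℝ) : ℝ :=
  ∑ i, ∑ j, (g x)⁻¹ i j * pd i f x * pd j f x

/-- Gradient vector field of `f` with respect to `g`. -/
noncomputable def gradv {n : ℕ} (g : (Fin n → ℝ) → Matrix (Fin n) (Fin n) ℝ)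
    (f : (Fin n → ℝ) → ℝ) (x : Fin n → ℝ) : Fin n → ℝ :=
  fun i => ∑ j, (g x)⁻¹ i j * pd j f x

/-- Divergence of a vector field: `div X = ∂_i X^i + Γ^i_{ik} X^k`. -/
noncomputable def divv {n : ℕ} (g : (Fin n → ℝ) → Matrix (Fin n) (Fin n) ℝ)
    (X : (Fin n → ℝ) → (Fin n → ℝ)) (x : Fin n → ℝ) : ℝ :=
  (∑ i, pd i (fun y => X y i) x) + ∑ i, ∑ k, christoffel g i i k x * X x k

/-- Lie derivative of the metric along a vector field `X`. -/
noncomputable def lieg {n : ℕ} (g : (Fin n → ℝ) → Matrix (Fin n) (Fin n) ℝ)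
    (X : (Fin n → ℝ) → (Fin n → ℝ)) (x : Fin n → ℝ) : Matrix (Fin n) (Fin n) ℝ :=
  Matrix.of fun i j => ∑ k, (X x k * pd k (fun y => g y i j) x
    + g x k j * pd i (fun y => X y k) x + g x i k * pd j (fun y => X y k) x)

/-- The conformal Killing operator `D_g X = (1/2) L_X g − (1/3)(div_g X) g`. -/
noncomputable def confKill {n : ℕ} (g : (Fin n → ℝ) → Matrix (Fin n) (Fin n) ℝ)
    (X : (Fin n → ℝ) → (Fin n → ℝ)) (x : Fin n → ℝ) : Matrix (Fin n) (Fin n) ℝ :=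
  (1/2 : ℝ) • lieg g X x - ((1/3) * divv g X x) • g x

/-- `|df|_g`. -/
noncomputable def normd {n : ℕ} (g : (Fin n → ℝ) → Matrix (Fin n) (Fin n) ℝ)
    (f : (Fin n → ℝ) → ℝ) (x : Fin n → ℝ) : ℝ :=
  Real.sqrt (normdsq g f x)

/-- `A_g(ρ) = (1/2)|dρ|_g div_g(|dρ|_g grad_g ρ)`. -/
noncomputable def Aop {n : ℕ} (g : (Fin n → ℝ) → Matrix (Fin n) (Fin n) ℝ)
    (f : (Fin n → ℝ) → ℝ) (x : Fin n → ℝ) : ℝ :=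
  (1/2) * normd g f x * divv g (fun y => fun i => normd g f y * gradv g f y i) x

/-- `H_g(ρ) = |dρ|⁶ D_g(|dρ|^{-2} grad ρ) + A_g(ρ)(dρ⊗dρ − (1/3)|dρ|² g)`. -/
noncomputable def Hop {n : ℕ} (g : (Fin n → ℝ) → Matrix (Fin n) (Fin n) ℝ)
    (f : (Fin n → ℝ) → ℝ) (x : Fin n → ℝ) : Matrix (Fin n) (Fin n) ℝ :=
  (normdsq g f x) ^ 3 • confKill g (fun y => (normdsq g f y)⁻¹ • gradv g f y) x
    + Aop g f x • (Matrix.of (fun i j => pd i f x * pd j f x)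
        - ((1/3) * normdsq g f x) • g x)

/- ## helper lemmas -/

lemma pd_mul {n : ℕ} {f h : (Fin n → ℝ) → ℝ} {x : Fin n → ℝ} (hf : DifferentiableAt ℝ f x)
    (hh : DifferentiableAt ℝ h x) (i : Fin n) :
    pd i (fun y => f y * h y) x = f x * pd i h x + h x * pd i f x := by
  unfold pd; rw [fderiv_fun_mul hf hh]; simp [smul_eq_mul]

lemma contDiff_pd {n : ℕ} {f : (Fin n → ℝ) → ℝ} (hf : ContDiff ℝ (⊤ : ℕ∞) f) (i : Fin n) :
    ContDiff ℝ (⊤ : ℕ∞) (pd i f) :=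
  (hf.fderiv_right (by simp)).clm_apply contDiff_const

lemma pd_pow {n : ℕ} {f : (Fin n → ℝ) → ℝ} (hf : ContDiff ℝ (⊤ : ℕ∞) f) (m : ℕ) (i : Fin n)
    (x : Fin n → ℝ) :
    pd i (fun y => f y ^ (m + 1)) x = (m + 1 : ℝ) * f x ^ m * pd i f x := by
  induction m with
  | zero => simp
  | succ m ih =>
    have h1 : (fun y => f y ^ (m + 1 + 1)) = fun y => f y ^ (m + 1) * f y := by
      funext y; ring
    rw [h1, pd_mul (f := fun y => f y ^ (m + 1)) (((hf.differentiable (by simp)) x).pow _) ((hf.differentiable (by simp)) x), ih]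
    push_cast; ring

section
variable {g : (Fin 3 → ℝ) → Matrix (Fin 3) (Fin 3) ℝ}
  (hg : ∀ i j, ContDiff ℝ (⊤ : ℕ∞) fun x => g x i j)
  (hsym : ∀ x, (g x).IsSymm) (hunit : ∀ x, IsUnit (g x).det)
  {θ : (Fin 3 → ℝ) → ℝ} (hθ : ContDiff ℝ (⊤ : ℕ∞) θ) (hθpos : ∀ x, 0 < θ x)
  {ρ : (Fin 3 → ℝ) → ℝ} (hρ : ContDiff ℝ (⊤ : ℕ∞) ρ)

include hg in
lemma contDiff_det : ContDiff ℝ (⊤ : ℕ∞) fun x => (g x).det := by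
  simp only [Matrix.det_fin_three]; fun_prop

include hg in
lemma contDiff_adj (i j : Fin 3) : ContDiff ℝ (⊤ : ℕ∞) fun x => (g x).adjugate i j := by
  fin_cases i <;> fin_cases j <;> (simp [Matrix.adjugate_fin_three]; fun_prop)

include hg hunit in
lemma contDiff_ginv (i j : Fin 3) : ContDiff ℝ (⊤ : ℕ∞) fun x => (g x)⁻¹ i j := by
  have h : (fun x => (g x)⁻¹ i j) = fun x => ((g x).det)⁻¹ * (g x).adjugate i j := by
    funext x
    rw [Matrix.inv_def, Ring.inverse_eq_inv']
    simp [Matrix.smul_apply, smul_eq_mul]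
  rw [h]
  exact ((contDiff_det hg).inv fun x => (hunit x).ne_zero).mul (contDiff_adj hg i j)

include hg hunit hρ in
lemma contDiff_normdsq : ContDiff ℝ (⊤ : ℕ∞) (normdsq g ρ) := by
  unfold normdsq
  exact ContDiff.sum fun i _ => ContDiff.sum fun j _ =>
    ((contDiff_ginv hg hunit i j).mul (contDiff_pd hρ i)).mul (contDiff_pd hρ j)

include hg hunit hρ in
lemma contDiff_gradv (i : Fin 3) : ContDiff ℝ (⊤ : ℕ∞) fun y => gradv g ρ y i := by
  simp only [gradv]
  exact ContDiff.sum fun j _ => (contDiff_ginv hg hunit i j).mul (contDiff_pd hρ j)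

include hunit hθpos in
lemma inv_smul_eq (x : Fin 3 → ℝ) :
    ((θ x) ^ 4 • g x)⁻¹ = ((θ x) ^ 4)⁻¹ • (g x)⁻¹ := by
  have h4 : (θ x) ^ 4 ≠ 0 := pow_ne_zero _ (hθpos x).ne'
  apply Matrix.inv_eq_right_inv
  rw [Matrix.smul_mul, Matrix.mul_smul, smul_smul, Matrix.mul_nonsing_inv _ (hunit x),
    mul_inv_cancel₀ h4, one_smul]

include hunit hθpos in
lemma inv_smul_entry (x : Fin 3 → ℝ) (i j : Fin 3) :
    ((θ x) ^ 4 • g x)⁻¹ i j = ((θ x) ^ 4)⁻¹ * (g x)⁻¹ i j := by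
  rw [inv_smul_eq hunit hθpos]; simp [Matrix.smul_apply, smul_eq_mul]

include hg hθ in
lemma pdg' (m a b : Fin 3) (x : Fin 3 → ℝ) :
    pd m (fun y => ((θ y) ^ 4 • g y) a b) x
      = θ x ^ 4 * pd m (fun y => g y a b) x + g x a b * (4 * θ x ^ 3 * pd m θ x) := by
  have h1 : (fun y => ((θ y) ^ 4 • g y) a b) = fun y => (θ y) ^ 4 * g y a b := rfl
  rw [h1, pd_mul (f := fun y => θ y ^ 4) ((hθ.differentiable (by simp) x).pow 4) ((hg a b).differentiable (by simp) x)]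
  have h2 : pd m (fun y => θ y ^ 4) x = (4 : ℝ) * θ x ^ 3 * pd m θ x := by
    have h3 := pd_pow hθ 3 m x; norm_num at h3; exact h3
  rw [h2]

include hunit in
lemma key_id1 (x : Fin 3 → ℝ) (k j : Fin 3) :
    ∑ l, (g x)⁻¹ k l * g x l j = if k = j then 1 else 0 := by
  have h := Matrix.nonsing_inv_mul (g x) (hunit x)
  calc ∑ l, (g x)⁻¹ k l * g x l j = ((g x)⁻¹ * g x) k j := (Matrix.mul_apply).symm
    _ = (1 : Matrix (Fin 3) (Fin 3) ℝ) k j := by rw [h]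
    _ = _ := Matrix.one_apply

include hsym hunit in
lemma key_id2 (x : Fin 3 → ℝ) (c : Fin 3 → ℝ) (k : Fin 3) :
    ∑ i, g x i k * ∑ l, (g x)⁻¹ i l * c l = c k := by
  have hs : ∀ i, g x i k = g x k i := fun i => (hsym x).apply k i
  simp_rw [hs, Finset.mul_sum]
  rw [Finset.sum_comm]
  have h : ∀ l, ∑ i, g x k i * ((g x)⁻¹ i l * c l) = (if k = l then 1 else 0) * c l := by
    intro l
    calc ∑ i, g x k i * ((g x)⁻¹ i l * c l) = (∑ i, g x k i * (g x)⁻¹ i l) * c l := by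
          rw [Finset.sum_mul]; exact Finset.sum_congr rfl fun i _ => by ring
      _ = ((g x * (g x)⁻¹) k l) * c l := by rw [Matrix.mul_apply]
      _ = _ := by rw [Matrix.mul_nonsing_inv _ (hunit x), Matrix.one_apply]
  simp_rw [h]
  simp

include hg hunit hθ hθpos in
lemma christ' (x : Fin 3 → ℝ) (k i j : Fin 3) :
    christoffel (fun y => (θ y) ^ 4 • g y) k i j x
      = christoffel g k i j x
        + 2 * (θ x)⁻¹ * ((if k = j then 1 else 0) * pd i θ x + (if k = i then 1 else 0) * pd j θ x
            - g x i j * ∑ l, (g x)⁻¹ k l * pd l θ x) := by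
  have hθx : θ x ≠ 0 := (hθpos x).ne'
  simp only [christoffel]
  have step : ∀ l : Fin 3,
      ((θ x) ^ 4 • g x)⁻¹ k l *
        (pd i (fun y => ((θ y) ^ 4 • g y) l j) x + pd j (fun y => ((θ y) ^ 4 • g y) l i) x
          - pd l (fun y => ((θ y) ^ 4 • g y) i j) x)
      = (g x)⁻¹ k l * (pd i (fun y => g y l j) x + pd j (fun y => g y l i) x
            - pd l (fun y => g y i j) x)
        + 4 * (θ x)⁻¹ * ((g x)⁻¹ k l * g x l j * pd i θ x + (g x)⁻¹ k l * g x l i * pd j θ x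
            - g x i j * ((g x)⁻¹ k l * pd l θ x)) := by
    intro l
    rw [inv_smul_entry hunit hθpos, pdg' hg hθ, pdg' hg hθ, pdg' hg hθ]
    field_simp
    ring
  simp_rw [step]
  rw [Finset.sum_add_distrib]
  have hS1 : ∑ l, 4 * (θ x)⁻¹ * ((g x)⁻¹ k l * g x l j * pd i θ x
        + (g x)⁻¹ k l * g x l i * pd j θ x - g x i j * ((g x)⁻¹ k l * pd l θ x))
      = 4 * (θ x)⁻¹ * ((if k = j then 1 else 0) * pd i θ x + (if k = i then 1 else 0) * pd j θ x
          - g x i j * ∑ l, (g x)⁻¹ k l * pd l θ x) := by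
    rw [← Finset.mul_sum]
    congr 1
    rw [Finset.sum_sub_distrib, Finset.sum_add_distrib, ← Finset.sum_mul, ← Finset.sum_mul,
      ← Finset.mul_sum, key_id1 hunit, key_id1 hunit]
  rw [hS1]
  ring

include hg hsym hunit hθ hθpos in
lemma divv' (X : (Fin 3 → ℝ) → Fin 3 → ℝ) (x : Fin 3 → ℝ) :
    divv (fun y => (θ y) ^ 4 • g y) X x
      = divv g X x + 6 * (θ x)⁻¹ * ∑ k, X x k * pd k θ x := by
  simp only [divv]
  have Sa : ∑ i : Fin 3, ∑ k : Fin 3, (if i = k then 1 else 0) * pd i θ x * X x k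
      = ∑ k, pd k θ x * X x k := by
    have h1 : ∀ i : Fin 3, ∑ k : Fin 3, (if i = k then 1 else 0) * pd i θ x * X x k
        = pd i θ x * X x i := by
      intro i
      rw [Finset.sum_eq_single i]
      · simp
      · intro b _ hb; simp [Ne.symm hb]
      · simp
    simp_rw [h1]
  have Sb : ∑ _i : Fin 3, ∑ k : Fin 3, pd k θ x * X x k
      = 3 * ∑ k, pd k θ x * X x k := by
    rw [Finset.sum_const, Finset.card_univ]
    show (3 : ℕ) • _ = _
    rw [nsmul_eq_mul]
    norm_num
  have Sc : ∑ i : Fin 3, ∑ k : Fin 3, g x i k * (∑ l, (g x)⁻¹ i l * pd l θ x) * X x k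
      = ∑ k, pd k θ x * X x k := by
    rw [Finset.sum_comm]
    have h1 : ∀ k : Fin 3, ∑ i : Fin 3, g x i k * (∑ l, (g x)⁻¹ i l * pd l θ x) * X x k
        = pd k θ x * X x k := by
      intro k
      rw [← Finset.sum_mul, key_id2 hsym hunit]
    simp_rw [h1]
  have h2 : ∑ i : Fin 3, ∑ k : Fin 3, christoffel (fun y => (θ y) ^ 4 • g y) i i k x * X x k
      = (∑ i : Fin 3, ∑ k : Fin 3, christoffel g i i k x * X x k)
        + 6 * (θ x)⁻¹ * ∑ k, X x k * pd k θ x := by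
    have h : ∀ i k : Fin 3, christoffel (fun y => (θ y) ^ 4 • g y) i i k x * X x k
        = christoffel g i i k x * X x k
          + 2 * (θ x)⁻¹ * ((if i = k then 1 else 0) * pd i θ x * X x k)
          + 2 * (θ x)⁻¹ * (pd k θ x * X x k)
          - 2 * (θ x)⁻¹ * (g x i k * (∑ l, (g x)⁻¹ i l * pd l θ x) * X x k) := by
      intro i k
      rw [christ' hg hunit hθ hθpos]
      simp only [eq_self_iff_true, if_true]
      ring
    simp_rw [h, Finset.sum_sub_distrib, Finset.sum_add_distrib, ← Finset.mul_sum, Sa, Sb, Sc]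
    have hsum : ∑ k, pd k θ x * X x k = ∑ k, X x k * pd k θ x :=
      Finset.sum_congr rfl fun k _ => by ring
    rw [hsum]
    ring
  rw [h2]
  ring
include hg hθ in
lemma lieg' (X : (Fin 3 → ℝ) → Fin 3 → ℝ) (x : Fin 3 → ℝ) (i j : Fin 3) :
    lieg (fun y => (θ y) ^ 4 • g y) X x i j
      = θ x ^ 4 * lieg g X x i j
        + (4 * θ x ^ 3 * ∑ k, X x k * pd k θ x) * g x i j := by
  simp only [lieg, Matrix.of_apply]
  have h : ∀ k : Fin 3, X x k * pd k (fun y => ((θ y) ^ 4 • g y) i j) x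
      + ((θ x) ^ 4 • g x) k j * pd i (fun y => X y k) x
      + ((θ x) ^ 4 • g x) i k * pd j (fun y => X y k) x
      = θ x ^ 4 * (X x k * pd k (fun y => g y i j) x + g x k j * pd i (fun y => X y k) x
          + g x i k * pd j (fun y => X y k) x)
        + (4 * θ x ^ 3 * (X x k * pd k θ x)) * g x i j := by
    intro k
    rw [pdg' hg hθ]
    simp only [Matrix.smul_apply, smul_eq_mul]
    ring
  simp_rw [h]
  have eB : ∑ k : Fin 3, 4 * θ x ^ 3 * (X x k * pd k θ x) * g x i j
      = (4 * θ x ^ 3 * ∑ k, X x k * pd k θ x) * g x i j := by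
    calc ∑ k : Fin 3, 4 * θ x ^ 3 * (X x k * pd k θ x) * g x i j
        = ∑ k : Fin 3, (X x k * pd k θ x) * (4 * θ x ^ 3 * g x i j) :=
          Finset.sum_congr rfl fun k _ => by ring
      _ = (∑ k : Fin 3, X x k * pd k θ x) * (4 * θ x ^ 3 * g x i j) := by
          rw [Finset.sum_mul]
      _ = _ := by ring
  have eA : ∑ k : Fin 3, θ x ^ 4 * (X x k * pd k (fun y => g y i j) x
        + g x k j * pd i (fun y => X y k) x + g x i k * pd j (fun y => X y k) x)
      = θ x ^ 4 * ∑ k : Fin 3, (X x k * pd k (fun y => g y i j) x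
        + g x k j * pd i (fun y => X y k) x + g x i k * pd j (fun y => X y k) x) := by
    rw [Finset.mul_sum]
  rw [Finset.sum_add_distrib, eA, eB, Finset.sum_add_distrib, Finset.sum_add_distrib]

include hg hsym hunit hθ hθpos in
lemma confKill' (X : (Fin 3 → ℝ) → Fin 3 → ℝ) (x : Fin 3 → ℝ) :
    confKill (fun y => (θ y) ^ 4 • g y) X x = θ x ^ 4 • confKill g X x := by
  have hθx : θ x ≠ 0 := (hθpos x).ne'
  ext i j
  simp only [confKill, Matrix.sub_apply, Matrix.smul_apply, smul_eq_mul]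
  rw [lieg' hg hθ, divv' hg hsym hunit hθ hθpos]
  field_simp
  ring

include hunit hθpos in
lemma normdsq' (x : Fin 3 → ℝ) :
    normdsq (fun y => (θ y) ^ 4 • g y) ρ x = ((θ x) ^ 4)⁻¹ * normdsq g ρ x := by
  simp only [normdsq]
  rw [Finset.mul_sum]
  refine Finset.sum_congr rfl fun i _ => ?_
  rw [Finset.mul_sum]
  refine Finset.sum_congr rfl fun j _ => ?_
  rw [inv_smul_entry hunit hθpos]
  ring

include hunit hθpos in
lemma gradv' (x : Fin 3 → ℝ) (i : Fin 3) :
    gradv (fun y => (θ y) ^ 4 • g y) ρ x i = ((θ x) ^ 4)⁻¹ * gradv g ρ x i := by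
  simp only [gradv]
  rw [Finset.mul_sum]
  refine Finset.sum_congr rfl fun j _ => ?_
  rw [inv_smul_entry hunit hθpos]
  ring

include hunit hθpos in
lemma normd' (x : Fin 3 → ℝ) :
    normd (fun y => (θ y) ^ 4 • g y) ρ x = ((θ x) ^ 2)⁻¹ * normd g ρ x := by
  simp only [normd]
  rw [normdsq' hunit hθpos]
  rw [Real.sqrt_mul (by positivity)]
  congr 1
  rw [show ((θ x) ^ 4)⁻¹ = (((θ x) ^ 2)⁻¹) ^ 2 by ring]
  exact Real.sqrt_sq (by positivity)
include hg hsym hunit hθ hθpos hρ in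
lemma Aop' (x : Fin 3 → ℝ) :
    Aop (fun y => (θ y) ^ 4 • g y) ρ x = ((θ x) ^ 8)⁻¹ * Aop g ρ x := by
  have hθx : θ x ≠ 0 := (hθpos x).ne'
  have hYfun : (fun y => fun i => normd (fun y' => (θ y') ^ 4 • g y') ρ y
        * gradv (fun y' => (θ y') ^ 4 • g y') ρ y i)
      = fun y => fun i => ((θ y) ^ 6)⁻¹ * (normd g ρ y * gradv g ρ y i) := by
    funext y i
    rw [normd' hunit hθpos, gradv' hunit hθpos,
      show ((θ y : ℝ) ^ 6)⁻¹ = ((θ y) ^ 2)⁻¹ * ((θ y) ^ 4)⁻¹ by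
        rw [← mul_inv, show (θ y : ℝ) ^ 2 * (θ y) ^ 4 = (θ y) ^ 6 from by ring]]
    ring
  simp only [Aop]
  rw [hYfun, normd' hunit hθpos]
  by_cases hN : normd g ρ x = 0
  · rw [hN]; ring
  · have hsx : normdsq g ρ x ≠ 0 := by
      intro h0
      exact hN (by simp [normd, h0])
    have hNd : DifferentiableAt ℝ (normd g ρ) x := by
      have hds : DifferentiableAt ℝ (normdsq g ρ) x :=
        (contDiff_normdsq hg hunit hρ).differentiable (by simp) x
      exact hds.sqrt hsx
    have hYd : ∀ i : Fin 3, DifferentiableAt ℝ (fun y => normd g ρ y * gradv g ρ y i) x :=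
      fun i => hNd.mul (((contDiff_gradv hg hunit hρ i)).differentiable (by simp) x)
    have hθ6 : DifferentiableAt ℝ (fun y => ((θ y) ^ 6)⁻¹) x :=
      ((hθ.differentiable (by simp) x).pow 6).inv (pow_ne_zero _ hθx)
    have hpd6 : ∀ m : Fin 3, pd m (fun y => θ y ^ 6) x = 6 * θ x ^ 5 * pd m θ x := by
      intro m; have h3 := pd_pow hθ 5 m x; norm_num at h3; exact h3
    have hpdinv : ∀ m : Fin 3, pd m (fun y => ((θ y) ^ 6)⁻¹) x
        = -6 * θ x ^ 5 * (((θ x) ^ 6)⁻¹ * ((θ x) ^ 6)⁻¹) * pd m θ x := by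
      intro m
      have hconst : pd m (fun y => ((θ y) ^ 6)⁻¹ * θ y ^ 6) x = 0 := by
        have e : (fun y => ((θ y) ^ 6)⁻¹ * θ y ^ 6) = fun _ => (1 : ℝ) := by
          funext y; exact inv_mul_cancel₀ (pow_ne_zero _ (hθpos y).ne')
        rw [e]; unfold pd; simp
      rw [pd_mul (h := fun y => θ y ^ 6) hθ6 ((hθ.differentiable (by simp) x).pow 6), hpd6] at hconst
      have h6 : (θ x) ^ 6 ≠ 0 := pow_ne_zero _ hθx
      field_simp at hconst ⊢
      linarith
    rw [divv' hg hsym hunit hθ hθpos]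
    simp only [divv]
    have hsplit : ∀ i : Fin 3,
        pd i (fun y => ((θ y) ^ 6)⁻¹ * (normd g ρ y * gradv g ρ y i)) x
        = ((θ x) ^ 6)⁻¹ * pd i (fun y => normd g ρ y * gradv g ρ y i) x
          + normd g ρ x * gradv g ρ x i
            * (-6 * θ x ^ 5 * (((θ x) ^ 6)⁻¹ * ((θ x) ^ 6)⁻¹) * pd i θ x) := by
      intro i
      rw [pd_mul hθ6 (hYd i), hpdinv]
    have hT1 : ∑ i : Fin 3, pd i (fun y => ((θ y) ^ 6)⁻¹ * (normd g ρ y * gradv g ρ y i)) x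
        = ((θ x) ^ 6)⁻¹ * (∑ i : Fin 3, pd i (fun y => normd g ρ y * gradv g ρ y i) x)
          + (-6 * θ x ^ 5 * (((θ x) ^ 6)⁻¹ * ((θ x) ^ 6)⁻¹))
            * ∑ k : Fin 3, normd g ρ x * gradv g ρ x k * pd k θ x := by
      simp_rw [hsplit]
      rw [Finset.sum_add_distrib, ← Finset.mul_sum]
      congr 1
      rw [Finset.mul_sum]
      exact Finset.sum_congr rfl fun i _ => by ring
    have hT2 : ∑ i : Fin 3, ∑ k : Fin 3,
          christoffel g i i k x * (((θ x) ^ 6)⁻¹ * (normd g ρ x * gradv g ρ x k))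
        = ((θ x) ^ 6)⁻¹ * ∑ i : Fin 3, ∑ k : Fin 3,
            christoffel g i i k x * (normd g ρ x * gradv g ρ x k) := by
      rw [Finset.mul_sum]
      refine Finset.sum_congr rfl fun i _ => ?_
      rw [Finset.mul_sum]
      exact Finset.sum_congr rfl fun k _ => by ring
    have hT3 : ∑ k : Fin 3, ((θ x) ^ 6)⁻¹ * (normd g ρ x * gradv g ρ x k) * pd k θ x
        = ((θ x) ^ 6)⁻¹ * ∑ k : Fin 3, normd g ρ x * gradv g ρ x k * pd k θ x := by
      rw [Finset.mul_sum]
      exact Finset.sum_congr rfl fun k _ => by ring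
    rw [hT1, hT2, hT3]
    field_simp
    ring

include hg hsym hunit hθ hθpos hρ in
lemma Hop' (x : Fin 3 → ℝ) :
    Hop (fun y => (θ y) ^ 4 • g y) ρ x = ((θ x) ^ 8)⁻¹ • Hop g ρ x := by
  have hθx : θ x ≠ 0 := (hθpos x).ne'
  have hX : (fun y => (normdsq (fun y' => (θ y') ^ 4 • g y') ρ y)⁻¹
        • gradv (fun y' => (θ y') ^ 4 • g y') ρ y)
      = fun y => (normdsq g ρ y)⁻¹ • gradv g ρ y := by
    funext y
    funext k
    simp only [Pi.smul_apply, smul_eq_mul]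
    rw [normdsq' hunit hθpos, gradv' hunit hθpos]
    have hty : θ y ≠ 0 := (hθpos y).ne'
    rw [mul_inv, inv_inv]
    calc θ y ^ 4 * (normdsq g ρ y)⁻¹ * (((θ y) ^ 4)⁻¹ * gradv g ρ y k)
        = (θ y ^ 4 * ((θ y) ^ 4)⁻¹) * ((normdsq g ρ y)⁻¹ * gradv g ρ y k) := by ring
      _ = (normdsq g ρ y)⁻¹ * gradv g ρ y k := by
          rw [mul_inv_cancel₀ (pow_ne_zero _ hty), one_mul]
  simp only [Hop]
  rw [hX, confKill' hg hsym hunit hθ hθpos, normdsq' hunit hθpos,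
    Aop' hg hsym hunit hθ hθpos hρ]
  ext i j
  simp only [Matrix.add_apply, Matrix.sub_apply, Matrix.smul_apply, Matrix.of_apply, smul_eq_mul]
  field_simp
end

theorem stmt16 (g : (Fin 3 → ℝ) → Matrix (Fin 3) (Fin 3) ℝ)
    (hg : ∀ i j, ContDiff ℝ (⊤ : ℕ∞) fun x => g x i j)
    (hsym : ∀ x, (g x).IsSymm) (hunit : ∀ x, IsUnit (g x).det)
    (ρ : (Fin 3 → ℝ) → ℝ) (hρ : ContDiff ℝ (⊤ : ℕ∞) ρ)
    (θ : (Fin 3 → ℝ) → ℝ) (hθ : ContDiff ℝ (⊤ : ℕ∞) θ) (hθpos : ∀ x, 0 < θ x) :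
    ∀ x, Aop (fun y => (θ y) ^ 4 • g y) ρ x = (θ x) ^ (-8 : ℤ) * Aop g ρ x ∧
      Hop (fun y => (θ y) ^ 4 • g y) ρ x = (θ x) ^ (-8 : ℤ) • Hop g ρ x := by
  intro x
  have h8 : (θ x) ^ (-8 : ℤ) = ((θ x) ^ 8)⁻¹ := by
    rw [zpow_neg]; norm_cast
  constructor
  · rw [h8]
    exact Aop' hg hsym hunit hθ hθpos hρ x
  · rw [h8]
    exact Hop' hg hsym hunit hθ hθpos hρ x
end
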